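/- Let (λ_i)_{i≥1} be a nondecreasing sequence of positive reals and, for a fixed index sequence (i_p)_{p≥1} of natural numbers, consider for each r ≥ 2 and each choice c₁,...,c_{r-1} ∈ {0,1}, c_r = 1, c_{r+1} = 0 the quantity Q(c) := ∑_{p=1}^r λ_{i_p} 2^{p-1} (c_p 2^{-p} + (-1)^{c_p} ∑_{q=p+1}^{r+1} 2^{-q} c_q)². Then sup over all such r and choices (c₁,...,c_r) of Q(c) is finite if and only if ∑_{p=1}^∞ λ_{i_p}/2^p < ∞. -/

import Mathlib

/-!
For digits `c_q ∈ {0, 1}` the tail `∑_{q > p} c_q 2^{-q}` lies in `[0, 2^{-p}]`, hence so does the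
bracket `c_p 2^{-p} + (-1)^{c_p} ∑_{q > p} c_q 2^{-q}`, and the `p`-th summand of `Q(c)` is at most
`λ_{i_p} 2^{-p}`: a convergent series bounds every `Q(c)`. Conversely, for the alternating digits
`1, 0, 1, 0, …` (ending with `c_r = 1`) each bracket is at least `2^{-p-1}`, so
`Q(c) ≥ (1/8) ∑_{p ≤ r} λ_{i_p} 2^{-p}` and a bound on `Q` bounds the partial sums.
-/

open Finset

noncomputable def qBracket (c : ℕ → ℕ) (m p : ℕ) : ℝ :=
  (c p : ℝ) * (2 : ℝ) ^ (-(p : ℤ)) +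
    (-1 : ℝ) ^ (c p) * ∑ q ∈ Icc (p + 1) m, (2 : ℝ) ^ (-(q : ℤ)) * (c q : ℝ)

noncomputable def Q (l : ℕ → ℝ) (i : ℕ → ℕ) (r : ℕ) (c : ℕ → ℕ) : ℝ :=
  ∑ p ∈ Icc 1 r, l (i p) * 2 ^ (p - 1) * qBracket c (r + 1) p ^ 2

lemma sum_Icc_one_eq_sum_range {M : Type*} [AddCommMonoid M] (f : ℕ → M) (n : ℕ) :
    ∑ p ∈ Icc 1 n, f p = ∑ k ∈ range n, f (k + 1) := by
  rw [← Ico_add_one_right_eq_Icc, sum_Ico_eq_sum_range, add_tsub_cancel_right]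
  simp only [add_comm]

lemma natCast_mul_add_neg_one_pow_mul_mem_Icc {b : ℕ} {a S : ℝ} (hb : b ≤ 1)
    (hS : S ∈ Set.Icc 0 a) : (b : ℝ) * a + (-1) ^ b * S ∈ Set.Icc 0 a := by
  obtain ⟨hS₀, hSa⟩ := hS
  rcases Nat.le_one_iff_eq_zero_or_eq_one.1 hb with rfl | rfl
  · simpa using ⟨hS₀, hSa⟩
  · simp only [Nat.cast_one, one_mul, pow_one, neg_one_mul, ← sub_eq_add_neg, Set.mem_Icc]
    constructor <;> linarith

section Digits

variable {c : ℕ → ℕ}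

lemma sum_Icc_two_zpow_neg_mul_le (hc : ∀ q, c q ≤ 1) (p m : ℕ) :
    ∑ q ∈ Icc (p + 1) m, (2 : ℝ) ^ (-(q : ℤ)) * c q ≤ 2 ^ (-(p : ℤ)) := by
  calc _ ≤ ∑ q ∈ Ico (p + 1) (m + 1), (2⁻¹ : ℝ) ^ q := by
        rw [Ico_add_one_right_eq_Icc]
        gcongr with q
        rw [zpow_neg, zpow_natCast, ← inv_pow]
        exact mul_le_of_le_one_right (by positivity) (by exact_mod_cast hc q)
    _ ≤ 2⁻¹ ^ (p + 1) / (1 - 2⁻¹) := geom_sum_Ico_le_of_lt_one (by norm_num) (by norm_num)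
    _ = 2 ^ (-(p : ℤ)) := by rw [zpow_neg, zpow_natCast, ← inv_pow]; ring

lemma qBracket_mem_Icc (hc : ∀ q, c q ≤ 1) (m p : ℕ) :
    qBracket c m p ∈ Set.Icc 0 (2 ^ (-(p : ℤ))) :=
  natCast_mul_add_neg_one_pow_mul_mem_Icc (hc p)
    ⟨sum_nonneg fun _ _ => by positivity, sum_Icc_two_zpow_neg_mul_le hc p m⟩

lemma mul_two_pow_mul_qBracket_sq_le {x : ℝ} (hx : 0 ≤ x) (hc : ∀ q, c q ≤ 1) (m p : ℕ) :
    x * 2 ^ (p - 1) * qBracket c m p ^ 2 ≤ x / 2 ^ p := by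
  obtain ⟨h₀, h₁⟩ := qBracket_mem_Icc hc m p
  rw [zpow_neg, zpow_natCast] at h₁
  calc x * 2 ^ (p - 1) * qBracket c m p ^ 2 ≤ x * 2 ^ p * ((2 ^ p)⁻¹) ^ 2 := by
        gcongr
        · norm_num
        · omega
    _ = x / 2 ^ p := by field_simp

end Digits

lemma two_zpow_neg_le_qBracket_mod_two {m p : ℕ} (hpm : p + 1 ≤ m) :
    (2 : ℝ) ^ (-((p + 1 : ℕ) : ℤ)) ≤ qBracket (· % 2) m p := by
  have hc : ∀ q, q % 2 ≤ 1 := fun q => by omega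
  set rest := ∑ q ∈ Icc (p + 2) m, (2 : ℝ) ^ (-(q : ℤ)) * ((q % 2 : ℕ) : ℝ)
  have hrest : rest ≤ 2 ^ (-((p + 1 : ℕ) : ℤ)) := sum_Icc_two_zpow_neg_mul_le hc (p + 1) m
  have hsplit : ∑ q ∈ Icc (p + 1) m, (2 : ℝ) ^ (-(q : ℤ)) * ((q % 2 : ℕ) : ℝ) =
      2 ^ (-((p + 1 : ℕ) : ℤ)) * (((p + 1) % 2 : ℕ) : ℝ) + rest := by
    rw [Icc_eq_cons_Ioc hpm, sum_cons, ← Icc_add_one_left_eq_Ioc]; rfl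
  have hdouble : (2 : ℝ) ^ (-(p : ℤ)) = 2 * 2 ^ (-((p + 1 : ℕ) : ℤ)) := by
    simp only [zpow_neg, zpow_natCast, pow_succ]; field_simp
  have hrest₀ : 0 ≤ rest := sum_nonneg fun _ _ => by positivity
  rw [qBracket, hsplit]
  rcases Nat.mod_two_eq_zero_or_one p with h | h
  · rw [h, show (p + 1) % 2 = 1 by omega]
    simp only [Nat.cast_zero, Nat.cast_one, zero_mul, pow_zero, one_mul, mul_one, zero_add]
    linarith
  · rw [h, show (p + 1) % 2 = 0 by omega]
    simp only [Nat.cast_zero, Nat.cast_one, one_mul, pow_one, mul_zero, zero_add, neg_one_mul]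
    linarith

lemma div_two_pow_le_eight_mul_qBracket_mod_two {x : ℝ} (hx : 0 ≤ x) {m p : ℕ} (hp : 1 ≤ p)
    (hpm : p + 1 ≤ m) : x / 2 ^ p ≤ 8 * (x * 2 ^ (p - 1) * qBracket (· % 2) m p ^ 2) := by
  have h := two_zpow_neg_le_qBracket_mod_two hpm
  rw [zpow_neg, zpow_natCast] at h
  obtain ⟨k, rfl⟩ : ∃ k, p = k + 1 := ⟨p - 1, by omega⟩
  calc x / 2 ^ (k + 1) = 8 * (x * 2 ^ k * ((2 ^ (k + 2))⁻¹) ^ 2) := by field_simp; ring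
    _ ≤ 8 * (x * 2 ^ (k + 1 - 1) * qBracket (· % 2) m (k + 1) ^ 2) := by
        rw [Nat.add_sub_cancel]; gcongr

section Q

variable {l : ℕ → ℝ} {i : ℕ → ℕ}

lemma Q_le_sum (hl : ∀ n, 0 ≤ l n) {c : ℕ → ℕ} (hc : ∀ q, c q ≤ 1) (r : ℕ) :
    Q l i r c ≤ ∑ p ∈ Icc 1 r, l (i p) / 2 ^ p :=
  sum_le_sum fun _ _ => mul_two_pow_mul_qBracket_sq_le (hl _) hc _ _

lemma sum_le_eight_mul_Q_mod_two (hl : ∀ n, 0 ≤ l n) (r : ℕ) :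
    ∑ p ∈ Icc 1 r, l (i p) / 2 ^ p ≤ 8 * Q l i r (· % 2) := by
  rw [Q, mul_sum]
  exact sum_le_sum fun p hp => div_two_pow_le_eight_mul_qBracket_mod_two (hl _)
    (mem_Icc.1 hp).1 (by linarith [(mem_Icc.1 hp).2])

end Q

theorem bounded_Q_iff_summable_general (l : ℕ → ℝ) (hpos : ∀ n, 0 < l n) (i : ℕ → ℕ) :
    (∃ C : ℝ, ∀ (r : ℕ) (c : ℕ → ℕ), 2 ≤ r → (∀ p, c p ≤ 1) → c r = 1 →
        c (r + 1) = 0 →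
        (∑ p ∈ Finset.Icc 1 r, l (i p) * 2 ^ (p - 1) *
          ((c p : ℝ) * (2 : ℝ) ^ (-(p : ℤ)) +
            (-1 : ℝ) ^ (c p) *
              ∑ q ∈ Finset.Icc (p + 1) (r + 1), (2 : ℝ) ^ (-(q : ℤ)) * (c q : ℝ)) ^ 2)
          ≤ C) ↔
      Summable (fun p : ℕ => l (i (p + 1)) / 2 ^ (p + 1)) := by
  have hl : ∀ n, 0 ≤ l n := fun n => (hpos n).le
  have hterm : ∀ p, 0 ≤ l (i p) / 2 ^ p := fun p => div_nonneg (hl _) (by positivity)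
  constructor
  · rintro ⟨C, hC⟩
    refine summable_of_sum_range_le (c := 8 * C) (fun k => hterm (k + 1)) fun n => ?_
    have hQ : Q l i (2 * n + 3) (· % 2) ≤ C :=
      hC _ _ (by omega) (fun p => by omega) (by omega) (by omega)
    calc ∑ k ∈ range n, l (i (k + 1)) / 2 ^ (k + 1) = ∑ p ∈ Icc 1 n, l (i p) / 2 ^ p :=
          (sum_Icc_one_eq_sum_range (fun p => l (i p) / 2 ^ p) n).symm
      _ ≤ ∑ p ∈ Icc 1 (2 * n + 3), l (i p) / 2 ^ p :=
          sum_le_sum_of_subset_of_nonneg (Icc_subset_Icc_right (by omega)) fun p _ _ => hterm p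
      _ ≤ 8 * Q l i (2 * n + 3) (· % 2) := sum_le_eight_mul_Q_mod_two hl _
      _ ≤ 8 * C := by linarith
  · intro hsum
    refine ⟨∑' k, l (i (k + 1)) / 2 ^ (k + 1), fun r c _ hc _ _ => ?_⟩
    calc Q l i r c ≤ ∑ p ∈ Icc 1 r, l (i p) / 2 ^ p := Q_le_sum hl hc r
      _ = ∑ k ∈ range r, l (i (k + 1)) / 2 ^ (k + 1) :=
          sum_Icc_one_eq_sum_range (fun p => l (i p) / 2 ^ p) r
      _ ≤ _ := hsum.sum_le_tsum _ fun k _ => hterm (k + 1)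

/-- Lemma 2(b): for a nondecreasing sequence `λ` of positive reals and an index
sequence `i`, the quantity
`Q(c) = ∑_{p=1}^r λ_{i_p} 2^{p-1} (c_p 2^{-p} + (-1)^{c_p} ∑_{q=p+1}^{r+1} 2^{-q} c_q)²`
is bounded uniformly over all `r ≥ 2` and binary digits `c₁,…,c_{r-1} ∈ {0,1}`,
`c_r = 1`, `c_{r+1} = 0`, if and only if `∑_{p=1}^∞ λ_{i_p}/2^p < ∞`. -/
theorem bounded_Q_iff_summable (l : ℕ → ℝ) (hpos : ∀ n, 0 < l n)
    (hmono : Monotone l) (i : ℕ → ℕ) :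
    (∃ C : ℝ, ∀ (r : ℕ) (c : ℕ → ℕ), 2 ≤ r → (∀ p, c p ≤ 1) → c r = 1 →
        c (r + 1) = 0 →
        (∑ p ∈ Finset.Icc 1 r, l (i p) * 2 ^ (p - 1) *
          ((c p : ℝ) * (2 : ℝ) ^ (-(p : ℤ)) +
            (-1 : ℝ) ^ (c p) *
              ∑ q ∈ Finset.Icc (p + 1) (r + 1), (2 : ℝ) ^ (-(q : ℤ)) * (c q : ℝ)) ^ 2)
          ≤ C) ↔
      Summable (fun p : ℕ => l (i (p + 1)) / 2 ^ (p + 1)) :=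
  bounded_Q_iff_summable_general l hpos i
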